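/- Let C ∈ ℝ^{n₁×n₂×n₃}, D ∈ ℝ^{n₁×l×n₃}, and let X_k, R_k, P_k, Q_k be the iterates of Algorithm 2 from an arbitrary initial tensor X₁. If R₁,…,R_k are all nonzero and Q₁,…,Q_{k−1} are all nonzero (so that the iterates up to index k are defined), then ⟨R_i, R_j⟩ = 0 and ⟨Q_i, Q_j⟩ = 0 for all 1 ≤ i, j ≤ k with i ≠ j. -/
import Mathlib


open Matrix Filter Topology

noncomputable section

/-- A third-order real tensor of size `n₁ × n₂ × n₃`, identified with the family of its
frontal slices indexed by `ZMod n₃`. -/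
abbrev Tensor (n₁ n₂ n₃ : ℕ) := ZMod n₃ → Matrix (Fin n₁) (Fin n₂) ℝ

/-- The T-product of third-order tensors: `(C ⋆ D)(k) = ∑ j, C (k - j) * D j`. -/
def tProd {n₁ n₂ l n₃ : ℕ} [NeZero n₃] (C : Tensor n₁ n₂ n₃) (D : Tensor n₂ l n₃) :
    Tensor n₁ l n₃ :=
  fun k => ∑ j : ZMod n₃, C (k - j) * D j

/-- The tensor transpose: `(Cᵀ)(k) = (C (-k))ᵀ`. -/
def tTrans {n₁ n₂ n₃ : ℕ} (C : Tensor n₁ n₂ n₃) : Tensor n₂ n₁ n₃ :=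
  fun k => (C (-k))ᵀ

/-- The matrix trace of the first frontal slice of a tensor with square slices. -/
def trFirst {m n₃ : ℕ} (S : Tensor m m n₃) : ℝ :=
  (S 0).trace

/-- The inner product `⟨C, D⟩ = ∑ k i j, C k i j * D k i j`. -/
def tInner {n₁ n₂ n₃ : ℕ} [NeZero n₃] (C D : Tensor n₁ n₂ n₃) : ℝ :=
  ∑ k : ZMod n₃, ∑ i : Fin n₁, ∑ j : Fin n₂, C k i j * D k i j

/-- The Frobenius norm `‖C‖ = √⟨C, C⟩`. -/
def tNorm {n₁ n₂ n₃ : ℕ} [NeZero n₃] (C : Tensor n₁ n₂ n₃) : ℝ :=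
  Real.sqrt (tInner C C)

/-- The block circulant matrix of a tensor: its `(k, l)` block is `C (k - l)`. -/
def bCirc {n n₃ : ℕ} [NeZero n₃] (C : Tensor n n n₃) :
    Matrix (ZMod n₃ × Fin n) (ZMod n₃ × Fin n) ℝ :=
  fun p q => C (p.1 - q.1) p.2 q.2

/-- `C` is T-symmetric positive definite: `Cᵀ = C` and `bCirc C` is positive definite. -/
def TSymPD {n n₃ : ℕ} [NeZero n₃] (C : Tensor n n n₃) : Prop :=
  tTrans C = C ∧ (bCirc C).PosDef

section aux
variable {n₁ n₂ l n₃ : ℕ} [NeZero n₃]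

lemma tInner_comm (A B : Tensor n₁ n₂ n₃) : tInner A B = tInner B A := by
  simp [tInner, mul_comm]

lemma tInner_sub_right (A B E : Tensor n₁ n₂ n₃) :
    tInner A (B - E) = tInner A B - tInner A E := by
  simp [tInner, mul_sub, Finset.sum_sub_distrib]

lemma tInner_add_left (A B E : Tensor n₁ n₂ n₃) :
    tInner (A + B) E = tInner A E + tInner B E := by
  simp [tInner, add_mul, Finset.sum_add_distrib]

lemma tInner_smul_right (c : ℝ) (A B : Tensor n₁ n₂ n₃) :
    tInner A (c • B) = c * tInner A B := by
  simp [tInner, Finset.mul_sum, mul_left_comm]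

lemma tInner_smul_left (c : ℝ) (A B : Tensor n₁ n₂ n₃) :
    tInner (c • A) B = c * tInner A B := by
  simp [tInner, Finset.mul_sum, mul_assoc]

lemma tInner_self_ne_zero {A : Tensor n₁ n₂ n₃} (hA : A ≠ 0) : tInner A A ≠ 0 := by
  intro h
  apply hA
  funext k
  ext i j
  have hk : ∀ x ∈ (Finset.univ : Finset (ZMod n₃)),
      0 ≤ ∑ i : Fin n₁, ∑ j : Fin n₂, A x i j * A x i j :=
    fun x _ => Finset.sum_nonneg fun i _ => Finset.sum_nonneg fun j _ => mul_self_nonneg _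
  have h1 := (Finset.sum_eq_zero_iff_of_nonneg hk).1 h k (Finset.mem_univ k)
  have h2 := (Finset.sum_eq_zero_iff_of_nonneg
    (fun i _ => Finset.sum_nonneg fun j _ => mul_self_nonneg _)).1 h1 i (Finset.mem_univ i)
  have h3 := (Finset.sum_eq_zero_iff_of_nonneg
    (fun j _ => mul_self_nonneg _)).1 h2 j (Finset.mem_univ j)
  simpa using mul_self_eq_zero.mp h3

lemma tInner_eq_trace (A B : Tensor n₁ n₂ n₃) :
    tInner A B = ∑ k : ZMod n₃, ((A k)ᵀ * B k).trace := by
  simp only [tInner, Matrix.trace, Matrix.diag, Matrix.mul_apply, Matrix.transpose_apply]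
  exact Finset.sum_congr rfl fun k _ => Finset.sum_comm

lemma tInner_adjoint (C : Tensor n₁ n₂ n₃) (B : Tensor n₁ l n₃) (A : Tensor n₂ l n₃) :
    tInner (tProd (tTrans C) B) A = tInner B (tProd C A) := by
  rw [tInner_eq_trace, tInner_eq_trace]
  have h1 : ∀ k : ZMod n₃, ((tProd (tTrans C) B k)ᵀ * A k).trace
      = ∑ j : ZMod n₃, ((B j)ᵀ * (C (j - k) * A k)).trace := by
    intro k
    have : (tProd (tTrans C) B k)ᵀ = ∑ j : ZMod n₃, (B j)ᵀ * C (j - k) := by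
      simp [tProd, tTrans, Matrix.transpose_sum, Matrix.transpose_mul, neg_sub]
    rw [this, Matrix.sum_mul, Matrix.trace_sum]
    exact Finset.sum_congr rfl fun j _ => by rw [Matrix.mul_assoc]
  have h2 : ∀ j : ZMod n₃, ((B j)ᵀ * (tProd C A) j).trace
      = ∑ k : ZMod n₃, ((B j)ᵀ * (C (j - k) * A k)).trace := by
    intro j
    simp [tProd, Matrix.mul_sum, Matrix.trace_sum]
  rw [Finset.sum_congr rfl fun k _ => h1 k, Finset.sum_congr rfl fun j _ => h2 j]
  exact Finset.sum_comm

lemma trFirst_eq_tInner (A B : Tensor n₁ n₂ n₃) :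
    trFirst (tProd (tTrans A) B) = tInner A B := by
  rw [trFirst, tInner_eq_trace]
  have : tProd (tTrans A) B 0 = ∑ j : ZMod n₃, (A j)ᵀ * B j := by
    simp [tProd, tTrans]
  rw [this, Matrix.trace_sum]

lemma tProd_add_right (C : Tensor n₁ n₂ n₃) (A B : Tensor n₂ l n₃) :
    tProd C (A + B) = tProd C A + tProd C B := by
  funext k
  simp [tProd, Matrix.mul_add, Finset.sum_add_distrib]

lemma tProd_smul_right (c : ℝ) (C : Tensor n₁ n₂ n₃) (A : Tensor n₂ l n₃) :
    tProd C (c • A) = c • tProd C A := by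
  funext k
  simp [tProd, Matrix.mul_smul, Finset.smul_sum]

end aux

theorem stmt_9 (n₁ n₂ l n₃ : ℕ) [NeZero n₃] (C : Tensor n₁ n₂ n₃)
    (D : Tensor n₁ l n₃)
    (X : ℕ → Tensor n₂ l n₃) (R : ℕ → Tensor n₁ l n₃)
    (P Q : ℕ → Tensor n₂ l n₃)
    (hR : ∀ i, 1 ≤ i → R i = D - tProd C (X i))
    (hP : ∀ i, 1 ≤ i → P i = tProd (tTrans C) (R i))
    (hQ1 : Q 1 = P 1)
    (hX : ∀ i, 1 ≤ i → X (i + 1) = X i +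
      (tInner (R i) (R i) / tInner (Q i) (Q i)) • Q i)
    (hQ : ∀ i, 1 ≤ i → Q (i + 1) = P (i + 1) -
      (trFirst (tProd (tTrans (P (i + 1))) (Q i)) / tInner (Q i) (Q i)) • Q i)
    (k : ℕ) (hRne : ∀ i, 1 ≤ i → i ≤ k → R i ≠ 0)
    (hQne : ∀ i, 1 ≤ i → i < k → Q i ≠ 0) :
    ∀ i j, 1 ≤ i → i ≤ k → 1 ≤ j → j ≤ k → i ≠ j →
      tInner (R i) (R j) = 0 ∧ tInner (Q i) (Q j) = 0 := by
  -- residual recurrence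
  have hRrec : ∀ i, 1 ≤ i → R (i + 1) = R i -
      (tInner (R i) (R i) / tInner (Q i) (Q i)) • tProd C (Q i) := by
    intro i hi
    rw [hR (i + 1) (le_trans hi (Nat.le_succ i)), hX i hi, tProd_add_right,
      tProd_smul_right, ← hR i hi |>.symm, sub_add_eq_sub_sub, ← hR i hi]
  -- the key identity relating residual differences and ⟨P j, Q i⟩
  have hPQ : ∀ i j, 1 ≤ i → 1 ≤ j →
      tInner (R j) (R i) - tInner (R j) (R (i + 1)) =
      (tInner (R i) (R i) / tInner (Q i) (Q i)) * tInner (P j) (Q i) := by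
    intro i j hi hj
    rw [hRrec i hi, tInner_sub_right, tInner_smul_right, hP j hj, tInner_adjoint]
    ring
  have key : ∀ m, m ≤ k → ∀ i j, 1 ≤ i → i < j → j ≤ m →
      tInner (R i) (R j) = 0 ∧ tInner (Q i) (Q j) = 0 := by
    intro m
    induction m with
    | zero => intro _ i j _ hij hj; omega
    | succ m ih =>
      intro hm i j hi hij hj
      have hmk : m ≤ k := by omega
      rcases Nat.lt_or_ge j (m + 1) with hj' | hj'
      · exact ih hmk i j hi hij (by omega)
      have hjm : j = m + 1 := by omega
      subst hjm
      have him : i ≤ m := by omega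
      have hm1 : 1 ≤ m := le_trans hi him
      have hQQ : ∀ t, 1 ≤ t → t ≤ m → tInner (Q t) (Q t) ≠ 0 :=
        fun t h1 h2 => tInner_self_ne_zero (hQne t h1 (by omega))
      have hRR : ∀ t, 1 ≤ t → t ≤ m → tInner (R t) (R t) ≠ 0 :=
        fun t h1 h2 => tInner_self_ne_zero (hRne t h1 (by omega))
      -- inner products of P t with Q m
      have hPin : ∀ t, 1 ≤ t → t ≤ m → tInner (P t) (Q m) =
          (if t = m then tInner (Q m) (Q m) else 0) := by
        intro t h1 h2
        rcases Nat.eq_or_lt_of_le h1 with h1' | h1'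
        · -- t = 1
          rw [← h1', ← hQ1]
          by_cases hm' : 1 = m
          · simp [hm']
          · have : (1 : ℕ) < m := by omega
            rw [if_neg hm']
            exact (ih hmk 1 m le_rfl this le_rfl).2
        · -- t ≥ 2, write t = s + 1
          obtain ⟨s, rfl⟩ : ∃ s, t = s + 1 := ⟨t - 1, by omega⟩
          have hs1 : 1 ≤ s := by omega
          have hPdec : P (s + 1) = Q (s + 1) +
              (trFirst (tProd (tTrans (P (s + 1))) (Q s)) / tInner (Q s) (Q s)) • Q s := by
            rw [hQ s hs1]; abel
          rw [hPdec, tInner_add_left, tInner_smul_left]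
          have hsQ : tInner (Q s) (Q m) = 0 :=
            (ih hmk s m hs1 (by omega) le_rfl).2
          by_cases ht : s + 1 = m
          · rw [if_pos ht, ht, hsQ]; ring
          · rw [if_neg ht, hsQ,
              (ih hmk (s + 1) m (by omega) (by omega) le_rfl).2]; ring
      -- Step A: residual orthogonality at level m+1
      have stepA : ∀ t, 1 ≤ t → t ≤ m → tInner (R t) (R (m + 1)) = 0 := by
        intro t h1 h2
        have hkey := hPQ m t hm1 h1
        rw [hPin t h1 h2] at hkey
        by_cases ht : t = m
        · subst ht
          rw [if_pos rfl, div_mul_cancel₀ _ (hQQ t h1 h2)] at hkey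
          linarith
        · rw [if_neg ht] at hkey
          have hRt : tInner (R t) (R m) = 0 := by
            rcases Nat.lt_or_ge t m with h | h
            · exact (ih hmk t m h1 h le_rfl).1
            · omega
          rw [hRt] at hkey
          linarith [hkey]
      -- Step B: direction orthogonality at level m+1
      have stepB : ∀ t, 1 ≤ t → t ≤ m → tInner (Q t) (Q (m + 1)) = 0 := by
        intro t h1 h2
        rw [hQ m hm1, tInner_sub_right, tInner_smul_right,
          trFirst_eq_tInner]
        by_cases ht : t = m
        · subst ht
          rw [div_mul_cancel₀ _ (hQQ t h1 h2), tInner_comm (Q t) (P (t + 1)), sub_self]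
        · have htm : t < m := by omega
          have hQt : tInner (Q t) (Q m) = 0 := (ih hmk t m h1 htm le_rfl).2
          have hP0 : tInner (P (m + 1)) (Q t) = 0 := by
            have hkey := hPQ t (m + 1) h1 (by omega)
            have e1 : tInner (R (m + 1)) (R t) = 0 := by
              rw [tInner_comm]; exact stepA t h1 h2
            have e2 : tInner (R (m + 1)) (R (t + 1)) = 0 := by
              rw [tInner_comm]; exact stepA (t + 1) (by omega) (by omega)
            rw [e1, e2, sub_zero] at hkey
            have hα : tInner (R t) (R t) / tInner (Q t) (Q t) ≠ 0 :=
              div_ne_zero (hRR t h1 h2) (hQQ t h1 h2)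
            exact (mul_eq_zero.mp hkey.symm).resolve_left hα
          rw [tInner_comm (Q t) (P (m + 1)), hP0, hQt, mul_zero, sub_zero]
      exact ⟨stepA i hi him, stepB i hi him⟩
  intro i j hi hik hj hjk hij
  rcases Nat.lt_or_ge i j with h | h
  · exact key k le_rfl i j hi h hjk
  · have h' : j < i := by omega
    obtain ⟨h1, h2⟩ := key k le_rfl j i hj h' hik
    exact ⟨by rwa [tInner_comm], by rwa [tInner_comm]⟩
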